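/- arXiv:1712.06725 — 3 statements merged into one kernel-verified Lean document; each statement's English description precedes it below -/
import Mathlib

section
/- If R is a Noetherian integral domain that is t-super potent, then R is a Krull domain; equivalently (since R is Noetherian), R is integrally closed in its quotient field. -/
open FractionalIdeal

/-- The fractional ideals of `R` inside its field of fractions. -/
abbrev FracId (R : Type*) [CommRing R] : Type _ :=
  FractionalIdeal (nonZeroDivisors R) (FractionRing R)

/-- A star operation on an integral domain `R`: a map on nonzero fractional ideals satisfying
`(cA)⋆ = c·A⋆`, `R⋆ = R`, `A ⊆ A⋆`, monotonicity, and idempotence.  (The value on the zero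
ideal is irrelevant.) -/
structure StarOp (R : Type*) [CommRing R] [IsDomain R] where
  star : FracId R → FracId R
  star_smul : ∀ c : FractionRing R, c ≠ 0 → ∀ I : FracId R, I ≠ 0 →
    star (spanSingleton (nonZeroDivisors R) c * I) = spanSingleton (nonZeroDivisors R) c * star I
  star_one : star 1 = 1
  le_star : ∀ I : FracId R, I ≠ 0 → I ≤ star I
  star_mono : ∀ I J : FracId R, I ≠ 0 → J ≠ 0 → I ≤ J → star I ≤ star J
  star_idem : ∀ I : FracId R, I ≠ 0 → star (star I) = star I

namespace StarOp

variable {R : Type*} [CommRing R] [IsDomain R]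

/-- A star operation has finite type if `A⋆` is the union of `J⋆` over the nonzero finitely
generated (fractional) subideals `J` of `A`. -/
def FiniteType (s : StarOp R) : Prop :=
  ∀ I : FracId R, I ≠ 0 → ∀ x : FractionRing R, (x ∈ s.star I ↔
    ∃ J : FracId R, J ≠ 0 ∧ (J : Submodule R (FractionRing R)).FG ∧ J ≤ I ∧ x ∈ s.star J)

/-- `⋆₁ ≤ ⋆₂` : `I^⋆₁ ⊆ I^⋆₂` for every nonzero fractional ideal `I`. -/
def le (s₁ s₂ : StarOp R) : Prop := ∀ I : FracId R, I ≠ 0 → s₁.star I ≤ s₂.star I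

/-- A (nonzero integral) `⋆`-ideal: an ideal with `I⋆ = I`. -/
def IsStarIdeal (s : StarOp R) (I : Ideal R) : Prop :=
  I ≠ ⊥ ∧ s.star (I : FracId R) = (I : FracId R)

/-- A maximal `⋆`-ideal: maximal among proper integral `⋆`-ideals. -/
def IsMaxStarIdeal (s : StarOp R) (M : Ideal R) : Prop :=
  M ≠ ⊤ ∧ s.IsStarIdeal M ∧ ∀ J : Ideal R, J ≠ ⊤ → s.IsStarIdeal J → M ≤ J → J = M

/-- A nonzero ideal `I` is `⋆`-invertible if `(I·I⁻¹)⋆ = R`. -/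
def IsStarInvertible (s : StarOp R) (I : Ideal R) : Prop :=
  I ≠ ⊥ ∧ s.star ((I : FracId R) * ((1 : FracId R) / (I : FracId R))) = 1

/-- A nonzero finitely generated ideal is `⋆`-rigid if it is contained in exactly one maximal
`⋆`-ideal. -/
def IsRigid (s : StarOp R) (I : Ideal R) : Prop :=
  I ≠ ⊥ ∧ I.FG ∧ ∃! M : Ideal R, s.IsMaxStarIdeal M ∧ I ≤ M

/-- A `⋆`-rigid ideal is `⋆`-super rigid if every finitely generated ideal containing it is
`⋆`-invertible. -/
def IsSuperRigid (s : StarOp R) (I : Ideal R) : Prop :=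
  s.IsRigid I ∧ ∀ J : Ideal R, J.FG → I ≤ J → s.IsStarInvertible J

/-- A maximal `⋆`-ideal is `⋆`-potent if it contains a `⋆`-rigid ideal. -/
def IsPotent (s : StarOp R) (M : Ideal R) : Prop :=
  s.IsMaxStarIdeal M ∧ ∃ I : Ideal R, s.IsRigid I ∧ I ≤ M

/-- A maximal `⋆`-ideal is `⋆`-super potent if it contains a `⋆`-super rigid ideal. -/
def IsSuperPotent (s : StarOp R) (M : Ideal R) : Prop :=
  s.IsMaxStarIdeal M ∧ ∃ I : Ideal R, s.IsSuperRigid I ∧ I ≤ M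

/-- `R` is `⋆`-potent if every maximal `⋆`-ideal is `⋆`-potent. -/
def PotentDomain (s : StarOp R) : Prop :=
  ∀ M : Ideal R, s.IsMaxStarIdeal M → s.IsPotent M

/-- `R` is `⋆`-super potent if every maximal `⋆`-ideal is `⋆`-super potent. -/
def SuperPotentDomain (s : StarOp R) : Prop :=
  ∀ M : Ideal R, s.IsMaxStarIdeal M → s.IsSuperPotent M

end StarOp

section TOperation

variable {R : Type*} [CommRing R] [IsDomain R]

/-- The `v`-operation `J ↦ (J⁻¹)⁻¹` on fractional ideals. -/
noncomputable def vOp (J : FracId R) : FracId R :=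
  (1 : FracId R) / ((1 : FracId R) / J)

/-- The `t`-closure of a fractional ideal: the union of `J^v` over all nonzero finitely
generated subideals `J` (realized as a submodule of the fraction field). -/
noncomputable def tOp (I : FracId R) : Submodule R (FractionRing R) :=
  ⨆ J ∈ {J : FracId R | J ≠ 0 ∧ (J : Submodule R (FractionRing R)).FG ∧ J ≤ I},
    ((vOp J : FracId R) : Submodule R (FractionRing R))

/-- A (nonzero integral) `t`-ideal. -/
def IsTIdeal (I : Ideal R) : Prop :=
  I ≠ ⊥ ∧ tOp (I : FracId R) = ((I : FracId R) : Submodule R (FractionRing R))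

/-- A maximal `t`-ideal: maximal among proper integral `t`-ideals. -/
def IsMaxTIdeal (M : Ideal R) : Prop :=
  M ≠ ⊤ ∧ IsTIdeal M ∧ ∀ J : Ideal R, J ≠ ⊤ → IsTIdeal J → M ≤ J → J = M

/-- A nonzero ideal `I` is `t`-invertible if `(I·I⁻¹)^t = R`. -/
def IsTInvertible (I : Ideal R) : Prop :=
  I ≠ ⊥ ∧ tOp ((I : FracId R) * ((1 : FracId R) / (I : FracId R))) =
    ((1 : FracId R) : Submodule R (FractionRing R))

/-- A nonzero finitely generated ideal is `t`-rigid if it is contained in exactly one maximal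
`t`-ideal. -/
def IsTRigid (I : Ideal R) : Prop :=
  I ≠ ⊥ ∧ I.FG ∧ ∃! M : Ideal R, IsMaxTIdeal M ∧ I ≤ M

/-- A `t`-rigid ideal is `t`-super rigid if every finitely generated ideal containing it is
`t`-invertible. -/
def IsTSuperRigid (I : Ideal R) : Prop :=
  IsTRigid I ∧ ∀ J : Ideal R, J.FG → I ≤ J → IsTInvertible J

/-- A maximal `t`-ideal is `t`-potent if it contains a `t`-rigid ideal. -/
def IsTPotent (M : Ideal R) : Prop :=
  IsMaxTIdeal M ∧ ∃ I : Ideal R, IsTRigid I ∧ I ≤ M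

/-- A maximal `t`-ideal is `t`-super potent if it contains a `t`-super rigid ideal. -/
def IsTSuperPotent (M : Ideal R) : Prop :=
  IsMaxTIdeal M ∧ ∃ I : Ideal R, IsTSuperRigid I ∧ I ≤ M

end TOperation

/-- `R` is `t`-potent if every maximal `t`-ideal is `t`-potent. -/
def TPotentDomain (R : Type*) [CommRing R] [IsDomain R] : Prop :=
  ∀ M : Ideal R, IsMaxTIdeal M → IsTPotent M

/-- `R` is `t`-super potent if every maximal `t`-ideal is `t`-super potent. -/
def TSuperPotentDomain (R : Type*) [CommRing R] [IsDomain R] : Prop :=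
  ∀ M : Ideal R, IsMaxTIdeal M → IsTSuperPotent M

/-- An ideal is invertible if `I·I⁻¹ = R` (as fractional ideals). -/
def IsInvertibleIdeal {R : Type*} [CommRing R] [IsDomain R] (I : Ideal R) : Prop :=
  I ≠ ⊥ ∧ (I : FracId R) * ((1 : FracId R) / (I : FracId R)) = 1

/-- An ideal `M` is `d`-super potent if it contains a nonzero finitely generated ideal `I`
such that every finitely generated ideal containing `I` is invertible. -/
def IsDSuperPotent {R : Type*} [CommRing R] [IsDomain R] (M : Ideal R) : Prop :=
  ∃ I : Ideal R, I ≠ ⊥ ∧ I.FG ∧ I ≤ M ∧ ∀ J : Ideal R, J.FG → I ≤ J → IsInvertibleIdeal J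

/-- An ideal `P` is divided (`P = P R_P`): every `x ∈ P` is divisible, within `P`, by every
`s ∉ P`. -/
def IsDividedIdeal {R : Type*} [CommRing R] (P : Ideal R) : Prop :=
  ∀ x ∈ P, ∀ s ∉ P, ∃ y ∈ P, x = s * y

/-- A divided prime ideal. -/
def IsDividedPrime {R : Type*} [CommRing R] (P : Ideal R) : Prop :=
  P.IsPrime ∧ IsDividedIdeal P

/-- A valuation domain: an integral domain in which, for any two elements, one divides the
other (equivalently, the ideals are totally ordered by inclusion). -/
def IsValuationDomain (A : Type*) [CommRing A] : Prop :=
  IsDomain A ∧ ∀ a b : A, a ∣ b ∨ b ∣ a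

/-- A height-one prime: a nonzero prime ideal such that the only prime strictly below it
is `(0)`. -/
def HeightOnePrime {R : Type*} [CommRing R] (P : Ideal R) : Prop :=
  P.IsPrime ∧ P ≠ ⊥ ∧ ∀ Q : Ideal R, Q.IsPrime → Q < P → Q = ⊥

/-- `R` has `t`-dimension one: every maximal `t`-ideal has height one. -/
def TDimensionOne (R : Type*) [CommRing R] [IsDomain R] : Prop :=
  ∀ M : Ideal R, IsMaxTIdeal M → HeightOnePrime M

/-- `R` is completely integrally closed: if `a ∈ R` is nonzero, `u` is in the fraction field,
and `a·uⁿ ∈ R` for all `n ≥ 1`, then `u ∈ R`. -/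
def CompletelyIntegrallyClosed (R : Type*) [CommRing R] [IsDomain R] : Prop :=
  ∀ (a : R) (u : FractionRing R), a ≠ 0 →
    (∀ n : ℕ, 0 < n → ∃ r : R, algebraMap R (FractionRing R) a * u ^ n =
      algebraMap R (FractionRing R) r) →
    ∃ r : R, algebraMap R (FractionRing R) r = u

/-- A Prüfer `v`-multiplication domain: every nonzero finitely generated ideal is
`t`-invertible. -/
def IsPvMD (R : Type*) [CommRing R] [IsDomain R] : Prop :=
  ∀ I : Ideal R, I ≠ ⊥ → I.FG → IsTInvertible I

/-- `x` (in the fraction field) belongs to the localization `R_P`, i.e. `x = r/s` with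
`s ∉ P`. -/
def MemLocalizationAt {R : Type*} [CommRing R] [IsDomain R] (P : Ideal R)
    (x : FractionRing R) : Prop :=
  ∃ r s : R, s ∉ P ∧ algebraMap R (FractionRing R) s * x = algebraMap R (FractionRing R) r

/-- An essential domain: `R` is an intersection (inside its fraction field) of localizations
at primes which are valuation domains. -/
def EssentialDomain (R : Type*) [CommRing R] [IsDomain R] : Prop :=
  ∃ 𝓟 : Set (Ideal R),
    (∀ P ∈ 𝓟, ∃ hP : P.IsPrime,
      IsValuationDomain (Localization (@Ideal.primeCompl R _ P hP))) ∧
    (∀ x : FractionRing R, (∀ P ∈ 𝓟, MemLocalizationAt P x) ↔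
      ∃ r : R, algebraMap R (FractionRing R) r = x)

/-- A generalized Krull domain: `R` is a locally finite intersection of essential rank-one
(height-one) valuation localizations. -/
def GeneralizedKrullDomain (R : Type*) [CommRing R] [IsDomain R] : Prop :=
  ∃ 𝓟 : Set (Ideal R),
    (∀ P ∈ 𝓟, ∃ hP : P.IsPrime, HeightOnePrime P ∧
      IsValuationDomain (Localization (@Ideal.primeCompl R _ P hP))) ∧
    (∀ x : FractionRing R, (∀ P ∈ 𝓟, MemLocalizationAt P x) ↔
      ∃ r : R, algebraMap R (FractionRing R) r = x) ∧
    (∀ a : R, a ≠ 0 → {P : Ideal R | P ∈ 𝓟 ∧ a ∈ P}.Finite)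

section ProofAux

open FractionalIdeal

variable {R : Type*} [CommRing R] [IsDomain R]

theorem TP.one_div_ne_zero {I : FracId R} (hI : I ≠ 0) : (1 : FracId R) / I ≠ 0 := by
  obtain ⟨a, haR, ha⟩ := I.isFractional
  have ha0 : (a : R) ≠ 0 := nonZeroDivisors.ne_zero haR
  have hmem : (algebraMap R (FractionRing R) a) ∈ (1 : FracId R) / I := by
    rw [mem_div_iff_of_ne_zero hI]
    intro y hy
    obtain ⟨r, hr⟩ := ha y hy
    exact (mem_one_iff _).mpr ⟨r, by rw [hr, Algebra.smul_def]⟩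
  intro h
  rw [h, mem_zero_iff] at hmem
  exact ha0 (IsFractionRing.injective R (FractionRing R)
    (by rw [hmem, RingHom.map_zero]))

theorem TP.ne_zero_of_le {I J : FracId R} (hI : I ≠ 0) (hIJ : I ≤ J) : J ≠ 0 :=
  fun h => hI (le_antisymm (h ▸ hIJ) (zero_le I))

theorem TP.div_anti {I J : FracId R} (hI : I ≠ 0) (hIJ : I ≤ J) :
    (1 : FracId R) / J ≤ (1 : FracId R) / I := by
  have hJ : J ≠ 0 := TP.ne_zero_of_le hI hIJ
  refine (le_div_iff_of_ne_zero hI).mpr (fun x hx y hy => ?_)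
  exact (mem_div_iff_of_ne_zero hJ).mp hx y (hIJ hy)

theorem TP.le_vOp {I : FracId R} (hI : I ≠ 0) : I ≤ vOp I :=
  (le_div_iff_mul_le (TP.one_div_ne_zero hI)).mpr mul_one_div_le_one

theorem TP.vOp_ne_zero {I : FracId R} (hI : I ≠ 0) : vOp I ≠ 0 :=
  TP.ne_zero_of_le hI (TP.le_vOp hI)

theorem TP.one_div_vOp {I : FracId R} (hI : I ≠ 0) :
    (1 : FracId R) / (vOp I) = (1 : FracId R) / I :=
  le_antisymm (TP.div_anti hI (TP.le_vOp hI)) (TP.le_vOp (TP.one_div_ne_zero hI))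

theorem TP.vOp_mono {I J : FracId R} (hI : I ≠ 0) (hIJ : I ≤ J) : vOp I ≤ vOp J :=
  TP.div_anti (TP.one_div_ne_zero (TP.ne_zero_of_le hI hIJ)) (TP.div_anti hI hIJ)

theorem TP.vOp_idem {I : FracId R} (hI : I ≠ 0) : vOp (vOp I) = vOp I := by
  show (1 : FracId R) / ((1 : FracId R) / vOp I) = vOp I
  rw [TP.one_div_vOp hI]; rfl

theorem TP.exists_ne_zero_mem {I : FracId R} (hI : I ≠ 0) :
    ∃ x : FractionRing R, x ∈ I ∧ x ≠ 0 := by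
  by_contra h
  push_neg at h
  apply hI
  ext x
  rw [mem_zero_iff]
  exact ⟨fun hx => by by_contra hne; exact hne (h x hx), fun hx => hx ▸ I.coeToSubmodule.zero_mem⟩

theorem TP.mul_ne_zero' {I J : FracId R} (hI : I ≠ 0) (hJ : J ≠ 0) : I * J ≠ 0 := by
  obtain ⟨x, hxI, hx0⟩ := TP.exists_ne_zero_mem hI
  obtain ⟨y, hyJ, hy0⟩ := TP.exists_ne_zero_mem hJ
  intro h
  have : x * y ∈ I * J := mul_mem_mul hxI hyJ
  rw [h, mem_zero_iff] at this
  exact (mul_ne_zero hx0 hy0) this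

theorem TP.mul_le_vOp {A B : FracId R} (hA : A ≠ 0) (hB : B ≠ 0) :
    A * vOp B ≤ vOp (A * B) := by
  have hAB : A * B ≠ 0 := TP.mul_ne_zero' hA hB
  rw [mul_comm]
  apply mul_le.mpr
  intro z hz a ha
  show z * a ∈ (1 : FracId R) / ((1 : FracId R) / (A * B))
  refine (mem_div_iff_of_ne_zero (TP.one_div_ne_zero hAB)).mpr (fun w hw' => ?_)
  have hw := (mem_div_iff_of_ne_zero hAB).mp hw'
  have hwa : w * a ∈ (1 : FracId R) / B := by
    rw [mem_div_iff_of_ne_zero hB]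
    intro b hb
    have := hw (a * b) (mul_mem_mul ha hb)
    rwa [← mul_assoc] at this
  have hz' : z ∈ (1 : FracId R) / ((1 : FracId R) / B) := hz
  have := (mem_div_iff_of_ne_zero (TP.one_div_ne_zero hB)).mp hz' (w * a) hwa
  show z * a * w ∈ (1 : FracId R)
  rwa [show z * a * w = z * (w * a) by ring]

theorem TP.vOp_mul_vOp {A B : FracId R} (hA : A ≠ 0) (hB : B ≠ 0) :
    vOp (A * vOp B) = vOp (A * B) := by
  have hAB : A * B ≠ 0 := TP.mul_ne_zero' hA hB
  refine le_antisymm ?_ (TP.vOp_mono hAB (mul_right_mono (a := A) (TP.le_vOp hB)))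
  calc vOp (A * vOp B) ≤ vOp (vOp (A * B)) :=
        TP.vOp_mono (TP.mul_ne_zero' hA (TP.vOp_ne_zero hB)) (TP.mul_le_vOp hA hB)
    _ = vOp (A * B) := TP.vOp_idem hAB

end ProofAux


section ProofAux2

open FractionalIdeal

variable {R : Type*} [CommRing R] [IsDomain R]

theorem TP.vOp_le_tOp {I J : FracId R} (hJ0 : J ≠ 0)
    (hfg : (J : Submodule R (FractionRing R)).FG) (hJI : J ≤ I) :
    ((vOp J : FracId R) : Submodule R (FractionRing R)) ≤ tOp I := by
  rw [tOp]
  exact le_iSup₂_of_le J ⟨hJ0, hfg, hJI⟩ le_rfl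

theorem TP.mem_tOp {I : FracId R} (hI : I ≠ 0) {x : FractionRing R} :
    x ∈ tOp I ↔ ∃ J : FracId R, J ≠ 0 ∧ (J : Submodule R (FractionRing R)).FG ∧ J ≤ I ∧
      x ∈ vOp J := by
  constructor
  · intro hx
    rw [tOp, ← iSup_subtype''] at hx
    obtain ⟨x0, hx0, hx00⟩ := TP.exists_ne_zero_mem hI
    have hne : Nonempty {J : FracId R // J ∈ {J : FracId R | J ≠ 0 ∧
        (J : Submodule R (FractionRing R)).FG ∧ J ≤ I}} := by
      refine ⟨⟨spanSingleton (nonZeroDivisors R) x0, ?_, ?_, ?_⟩⟩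
      · exact spanSingleton_ne_zero_iff.mpr hx00
      · rw [coe_spanSingleton]; exact Submodule.fg_span_singleton x0
      · exact spanSingleton_le_iff_mem.mpr hx0
    have hdir : Directed (· ≤ ·) fun (J : {J : FracId R // J ∈ {J : FracId R | J ≠ 0 ∧
        (J : Submodule R (FractionRing R)).FG ∧ J ≤ I}}) =>
        ((vOp J.1 : FracId R) : Submodule R (FractionRing R)) := by
      rintro ⟨J₁, h₁⟩ ⟨J₂, h₂⟩
      refine ⟨⟨J₁ ⊔ J₂, TP.ne_zero_of_le h₁.1 le_sup_left, ?_, sup_le h₁.2.2 h₂.2.2⟩, ?_, ?_⟩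
      · rw [coe_sup]; exact Submodule.FG.sup h₁.2.1 h₂.2.1
      · exact coe_le_coe.mpr (TP.vOp_mono h₁.1 le_sup_left)
      · exact coe_le_coe.mpr (TP.vOp_mono h₂.1 le_sup_right)
    obtain ⟨⟨J, hJ⟩, hxJ⟩ := (Submodule.mem_iSup_of_directed _ hdir).mp hx
    exact ⟨J, hJ.1, hJ.2.1, hJ.2.2, hxJ⟩
  · rintro ⟨J, h1, h2, h3, h4⟩
    exact TP.vOp_le_tOp h1 h2 h3 h4

theorem TP.tOp_mono {I I' : FracId R} (h : I ≤ I') : tOp I ≤ tOp I' := by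
  rw [tOp, tOp]
  refine iSup₂_le fun J hJ => le_iSup₂_of_le J ⟨hJ.1, hJ.2.1, hJ.2.2.trans h⟩ le_rfl

theorem TP.le_tOp {I : FracId R} (hI : I ≠ 0) :
    (I : Submodule R (FractionRing R)) ≤ tOp I := by
  intro x hx
  by_cases hx0 : x = 0
  · exact hx0 ▸ (tOp I).zero_mem
  · refine (TP.mem_tOp hI).mpr ⟨spanSingleton (nonZeroDivisors R) x,
      spanSingleton_ne_zero_iff.mpr hx0,
      by rw [coe_spanSingleton]; exact Submodule.fg_span_singleton x,
      spanSingleton_le_iff_mem.mpr hx, ?_⟩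
    exact TP.le_vOp (spanSingleton_ne_zero_iff.mpr hx0) (mem_spanSingleton_self _ x)

theorem TP.tOp_le_vOp {I : FracId R} (hI : I ≠ 0) :
    tOp I ≤ ((vOp I : FracId R) : Submodule R (FractionRing R)) := by
  rw [tOp]
  exact iSup₂_le fun J hJ => coe_le_coe.mpr (TP.vOp_mono hJ.1 hJ.2.2)

theorem TP.vOp_one : vOp (1 : FracId R) = 1 := by
  rw [vOp, FractionalIdeal.div_one, FractionalIdeal.div_one]

theorem TP.tOp_one : tOp (1 : FracId R) = ((1 : FracId R) : Submodule R (FractionRing R)) :=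
  le_antisymm (by simpa [TP.vOp_one] using TP.tOp_le_vOp (one_ne_zero' (FracId R)))
    (TP.le_tOp (one_ne_zero' (FracId R)))

theorem TP.tOp_le_one {I : FracId R} (h : I ≤ 1) :
    tOp I ≤ ((1 : FracId R) : Submodule R (FractionRing R)) := by
  rw [← TP.tOp_one]; exact TP.tOp_mono h

end ProofAux2



section ProofAux3

open FractionalIdeal

variable {R : Type*} [CommRing R] [IsDomain R]

theorem TP.fg_finsetSup {α : Type*} (T : Finset α) (f : α → FracId R)
    (hf : ∀ x ∈ T, ((f x : FracId R) : Submodule R (FractionRing R)).FG) :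
    ((T.sup f : FracId R) : Submodule R (FractionRing R)).FG := by
  refine Finset.sup_induction (p := fun (J : FracId R) =>
    (J : Submodule R (FractionRing R)).FG) ?_ (fun a ha b hb => ?_) hf
  · show ((⊥ : FracId R) : Submodule R (FractionRing R)).FG
    rw [show (⊥ : FracId R) = 0 from rfl, coe_zero]
    exact Submodule.fg_bot
  · show ((a ⊔ b : FracId R) : Submodule R (FractionRing R)).FG
    rw [coe_sup]
    exact Submodule.FG.sup ha hb

theorem TP.tOp_le {I : FracId R} {N : Submodule R (FractionRing R)}
    (h : ∀ J : FracId R, J ≠ 0 → (J : Submodule R (FractionRing R)).FG → J ≤ I →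
      ((vOp J : FracId R) : Submodule R (FractionRing R)) ≤ N) : tOp I ≤ N := by
  rw [tOp]
  exact iSup₂_le fun J hJ => h J hJ.1 hJ.2.1 hJ.2.2

theorem TP.exists_fg_le_vOp {X J : FracId R} (hX : X ≠ 0) (hJ0 : J ≠ 0)
    (hfg : (J : Submodule R (FractionRing R)).FG)
    (hle : (J : Submodule R (FractionRing R)) ≤ tOp X) :
    ∃ J₀ : FracId R, J₀ ≠ 0 ∧ (J₀ : Submodule R (FractionRing R)).FG ∧ J₀ ≤ X ∧ J ≤ vOp J₀ := by
  obtain ⟨T, hT⟩ := hfg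
  have hmem : ∀ x ∈ T, x ∈ tOp X := fun x hx =>
    hle (hT ▸ Submodule.subset_span hx)
  choose! F hF1 hF2 hF3 hF4 using fun (x : FractionRing R) (hx : x ∈ tOp X) =>
    (TP.mem_tOp hX).mp hx
  set J₀ : FracId R := T.sup F with hJ₀def
  have hJle : J ≤ vOp J₀ := by
    rw [← coe_le_coe, ← hT]
    refine Submodule.span_le.mpr (fun x hx => ?_)
    have h1 : x ∈ vOp (F x) := hF4 x (hmem x hx)
    exact TP.vOp_mono (hF1 x (hmem x hx)) (Finset.le_sup hx) h1
  have hJ₀0 : J₀ ≠ 0 := by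
    intro h
    apply hJ0
    rw [h] at hJle
    have : vOp (0 : FracId R) = 0 := by rw [vOp, FractionalIdeal.div_zero, FractionalIdeal.div_zero]
    rw [this] at hJle
    exact le_antisymm hJle (zero_le J)
  exact ⟨J₀, hJ₀0, TP.fg_finsetSup T F (fun x hx => hF2 x (hmem x hx)),
    Finset.sup_le (fun x hx => hF3 x (hmem x hx)), hJle⟩

theorem TP.tOp_tOp {X Y : FracId R} (hX : X ≠ 0)
    (hY : (Y : Submodule R (FractionRing R)) = tOp X) : tOp Y = tOp X := by
  have hXY : X ≤ Y := coe_le_coe.mp (hY ▸ TP.le_tOp hX)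
  have hY0 : Y ≠ 0 := TP.ne_zero_of_le hX hXY
  refine le_antisymm (TP.tOp_le fun J hJ0 hJfg hJle => ?_) (by rw [← hY]; exact TP.le_tOp hY0)
  have hle2 : (J : Submodule R (FractionRing R)) ≤ tOp X := hY ▸ coe_le_coe.mpr hJle
  obtain ⟨J₀, hJ₀0, hJ₀fg, hJ₀le, hJv⟩ := TP.exists_fg_le_vOp hX hJ0 hJfg hle2
  have h1 : vOp J ≤ vOp J₀ := by
    have := TP.vOp_mono hJ0 hJv
    rwa [TP.vOp_idem hJ₀0] at this
  exact le_trans (coe_le_coe.mpr h1) (TP.vOp_le_tOp hJ₀0 hJ₀fg hJ₀le)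

theorem TP.exists_fg_mul {X Y J : FracId R} (hfg : (J : Submodule R (FractionRing R)).FG)
    (hle : J ≤ X * Y) :
    ∃ X₁ Y₁ : FracId R, (X₁ : Submodule R (FractionRing R)).FG ∧
      (Y₁ : Submodule R (FractionRing R)).FG ∧ X₁ ≤ X ∧ Y₁ ≤ Y ∧ J ≤ X₁ * Y₁ := by
  have key : ∀ g ∈ (X * Y : FracId R), ∃ p : FracId R × FracId R,
      (p.1 : Submodule R (FractionRing R)).FG ∧ (p.2 : Submodule R (FractionRing R)).FG ∧
      p.1 ≤ X ∧ p.2 ≤ Y ∧ g ∈ p.1 * p.2 := by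
    intro g hg
    have hg' : g ∈ ((X : Submodule R (FractionRing R)) * (Y : Submodule R (FractionRing R))) := by
      rw [← coe_mul]; exact hg
    refine Submodule.mul_induction_on hg' (fun m hm n hn => ?_) (fun a b ha hb => ?_)
    · refine ⟨⟨spanSingleton (nonZeroDivisors R) m, spanSingleton (nonZeroDivisors R) n⟩,
        ?_, ?_, spanSingleton_le_iff_mem.mpr hm, spanSingleton_le_iff_mem.mpr hn,
        mul_mem_mul (mem_spanSingleton_self _ m) (mem_spanSingleton_self _ n)⟩
      · rw [coe_spanSingleton]; exact Submodule.fg_span_singleton m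
      · rw [coe_spanSingleton]; exact Submodule.fg_span_singleton n
    · obtain ⟨⟨Xa, Ya⟩, hXa, hYa, hXaX, hYaY, hamem⟩ := ha
      obtain ⟨⟨Xb, Yb⟩, hXb, hYb, hXbX, hYbY, hbmem⟩ := hb
      refine ⟨⟨Xa ⊔ Xb, Ya ⊔ Yb⟩, by rw [coe_sup]; exact hXa.sup hXb,
        by rw [coe_sup]; exact hYa.sup hYb, sup_le hXaX hXbX, sup_le hYaY hYbY, ?_⟩
      have h1 : Xa * Ya ≤ (Xa ⊔ Xb) * (Ya ⊔ Yb) :=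
        le_trans (mul_right_mono (a := Xa) le_sup_left) (mul_left_mono (a := _) le_sup_left)
      have h2 : Xb * Yb ≤ (Xa ⊔ Xb) * (Ya ⊔ Yb) :=
        le_trans (mul_right_mono (a := Xb) le_sup_right) (mul_left_mono (a := _) le_sup_right)
      exact mem_coe.mp (Submodule.add_mem _ (mem_coe.mpr (h1 hamem)) (mem_coe.mpr (h2 hbmem)))
  obtain ⟨T, hT⟩ := hfg
  have hmem : ∀ g ∈ T, g ∈ (X * Y : FracId R) := fun g hg =>
    hle (mem_coe.mp (hT ▸ Submodule.subset_span hg))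
  choose! P hP1 hP2 hP3 hP4 hP5 using key
  refine ⟨T.sup (fun g => (P g).1), T.sup (fun g => (P g).2),
    TP.fg_finsetSup _ _ (fun g hg => hP1 g (hmem g hg)),
    TP.fg_finsetSup _ _ (fun g hg => hP2 g (hmem g hg)),
    Finset.sup_le (fun g hg => hP3 g (hmem g hg)),
    Finset.sup_le (fun g hg => hP4 g (hmem g hg)), ?_⟩
  rw [← coe_le_coe, ← hT]
  refine Submodule.span_le.mpr (fun g hg => ?_)
  have h5 := hP5 g (hmem g hg)
  have h6 : (P g).1 * (P g).2 ≤ T.sup (fun g => (P g).1) * T.sup (fun g => (P g).2) :=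
    le_trans (mul_right_mono (a := (P g).1) (Finset.le_sup (f := fun g => (P g).2) hg))
      (mul_left_mono (a := (T.sup fun g => (P g).2)) (Finset.le_sup (f := fun g => (P g).1) hg))
  exact mem_coe.mpr (h6 h5)

theorem TP.tOp_mul_le {X Y Y' : FracId R} (hX : X ≠ 0) (hY : Y ≠ 0) (hY' : Y' ≠ 0)
    (h : tOp Y ≤ tOp Y') : tOp (X * Y) ≤ tOp (X * Y') := by
  refine TP.tOp_le (fun J hJ0 hJfg hJle => ?_)
  obtain ⟨X₁, Y₁, hX₁fg, hY₁fg, hX₁X, hY₁Y, hJ11⟩ := TP.exists_fg_mul hJfg hJle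
  have hX₁0 : X₁ ≠ 0 := by
    intro h0; apply hJ0
    rw [h0, zero_mul] at hJ11
    exact le_antisymm hJ11 (zero_le J)
  have hY₁0 : Y₁ ≠ 0 := by
    intro h0; apply hJ0
    rw [h0, mul_zero] at hJ11
    exact le_antisymm hJ11 (zero_le J)
  have hY₁t : (Y₁ : Submodule R (FractionRing R)) ≤ tOp Y' :=
    le_trans (le_trans (coe_le_coe.mpr hY₁Y) (TP.le_tOp hY)) h
  obtain ⟨J₀, hJ₀0, hJ₀fg, hJ₀le, hY₁v⟩ := TP.exists_fg_le_vOp hY' hY₁0 hY₁fg hY₁t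
  have hJle2 : J ≤ X₁ * vOp J₀ := hJ11.trans (mul_right_mono (a := X₁) hY₁v)
  have h1 : vOp J ≤ vOp (X₁ * J₀) := by
    rw [← TP.vOp_mul_vOp hX₁0 hJ₀0]
    exact TP.vOp_mono hJ0 hJle2
  refine le_trans (coe_le_coe.mpr h1) (TP.vOp_le_tOp (TP.mul_ne_zero' hX₁0 hJ₀0) ?_ ?_)
  · rw [coe_mul]; exact Submodule.FG.mul hX₁fg hJ₀fg
  · exact le_trans (mul_right_mono (a := X₁) hJ₀le) (mul_left_mono (a := Y') hX₁X)

theorem TP.tOp_mul_congr {X Y Y' : FracId R} (hX : X ≠ 0) (hY : Y ≠ 0) (hY' : Y' ≠ 0)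
    (h : tOp Y = tOp Y') : tOp (X * Y) = tOp (X * Y') :=
  le_antisymm (TP.tOp_mul_le hX hY hY' h.le) (TP.tOp_mul_le hX hY' hY h.ge)

theorem TP.spanSingleton_mul_vOp_le {γ : FractionRing R} (hγ : γ ≠ 0) {X : FracId R}
    (hX : X ≠ 0) : spanSingleton (nonZeroDivisors R) γ * vOp X ≤
      vOp (spanSingleton (nonZeroDivisors R) γ * X) := by
  have hsγ : spanSingleton (nonZeroDivisors R) γ ≠ (0 : FracId R) :=
    spanSingleton_ne_zero_iff.mpr hγ
  have hγX : spanSingleton (nonZeroDivisors R) γ * X ≠ 0 := TP.mul_ne_zero' hsγ hX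
  refine mul_le.mpr (fun a ha z hz => ?_)
  obtain ⟨r, hr⟩ := (mem_spanSingleton _).mp ha
  show a * z ∈ (1 : FracId R) / ((1 : FracId R) / (spanSingleton (nonZeroDivisors R) γ * X))
  refine (mem_div_iff_of_ne_zero (TP.one_div_ne_zero hγX)).mpr (fun w hw' => ?_)
  have hw := (mem_div_iff_of_ne_zero hγX).mp hw'
  have hwγ : w * γ ∈ (1 : FracId R) / X := by
    rw [mem_div_iff_of_ne_zero hX]
    intro x hx
    have := hw (γ * x) (mul_mem_mul (mem_spanSingleton_self _ γ) hx)
    rwa [show w * γ * x = w * (γ * x) by ring]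
  have hz' : z ∈ (1 : FracId R) / ((1 : FracId R) / X) := hz
  have h1 : z * (w * γ) ∈ (1 : FracId R) :=
    (mem_div_iff_of_ne_zero (TP.one_div_ne_zero hX)).mp hz' (w * γ) hwγ
  have h2 : r • (z * (w * γ)) ∈ ((1 : FracId R) : Submodule R (FractionRing R)) :=
    Submodule.smul_mem _ r h1
  show a * z * w ∈ (1 : FracId R)
  rw [← hr, show (r • γ) * z * w = r • (z * (w * γ)) by rw [smul_mul_assoc, smul_mul_assoc]; congr 1; ring]
  exact h2

theorem TP.smul_mem_tOp {γ : FractionRing R} (hγ : γ ≠ 0) {X : FracId R} (hX : X ≠ 0)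
    {x : FractionRing R} (hx : x ∈ tOp X) :
    γ * x ∈ tOp (spanSingleton (nonZeroDivisors R) γ * X) := by
  have hsγ : spanSingleton (nonZeroDivisors R) γ ≠ (0 : FracId R) :=
    spanSingleton_ne_zero_iff.mpr hγ
  obtain ⟨J, hJ0, hJfg, hJle, hxJ⟩ := (TP.mem_tOp hX).mp hx
  have hmem : γ * x ∈ vOp (spanSingleton (nonZeroDivisors R) γ * J) :=
    TP.spanSingleton_mul_vOp_le hγ hJ0 (mul_mem_mul (mem_spanSingleton_self _ γ) hxJ)
  refine (TP.mem_tOp (TP.mul_ne_zero' hsγ hX)).mpr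
    ⟨spanSingleton (nonZeroDivisors R) γ * J, TP.mul_ne_zero' hsγ hJ0, ?_,
      mul_right_mono (a := _) hJle, hmem⟩
  rw [coe_mul, coe_spanSingleton]
  exact Submodule.FG.mul (Submodule.fg_span_singleton γ) hJfg

end ProofAux3



section ProofAux4

open FractionalIdeal

variable {R : Type*} [CommRing R] [IsDomain R]

theorem TP.coeIdeal_ne_zero'' {I : Ideal R} (h : I ≠ ⊥) : (I : FracId R) ≠ 0 :=
  (coeIdeal_ne_zero' le_rfl).mpr h

theorem TP.exists_tIdeal_of_tOp {X : FracId R} (hX : X ≠ 0) (hle : X ≤ 1) :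
    ∃ H : Ideal R, ((H : FracId R) : Submodule R (FractionRing R)) = tOp X ∧ IsTIdeal H ∧
      ∀ E : Ideal R, (E : FracId R) ≤ X → E ≤ H := by
  have hsub : tOp X ≤ ((1 : FracId R) : Submodule R (FractionRing R)) := TP.tOp_le_one hle
  have hfr : IsFractional (nonZeroDivisors R) (tOp X) :=
    isFractional_of_le_one _ (by rwa [coe_one] at hsub)
  set T : FracId R := ⟨tOp X, hfr⟩ with hTdef
  have hT1 : T ≤ 1 := by rw [← coe_le_coe]; exact hsub
  obtain ⟨H, hH⟩ := le_one_iff_exists_coeIdeal.mp hT1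
  have hcoe : ((H : FracId R) : Submodule R (FractionRing R)) = tOp X := by rw [hH]; rfl
  have hHne : H ≠ ⊥ := by
    intro h0
    apply hX
    have h1 : (X : Submodule R (FractionRing R)) ≤ tOp X := TP.le_tOp hX
    rw [← hcoe, h0] at h1
    have h2 : X ≤ ((⊥ : Ideal R) : FracId R) := coe_le_coe.mp h1
    rw [show ((⊥ : Ideal R) : FracId R) = 0 by
      rw [coeIdeal_eq_zero' (le_rfl : nonZeroDivisors R ≤ nonZeroDivisors R)]] at h2
    exact le_antisymm h2 (zero_le X)
  refine ⟨H, hcoe, ⟨hHne, by rw [TP.tOp_tOp hX hcoe, hcoe]⟩, fun E hE => ?_⟩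
  refine (coeIdeal_le_coeIdeal (FractionRing R)).mp (coe_le_coe.mp ?_)
  rw [hcoe]
  exact le_trans (coe_le_coe.mpr hE) (TP.le_tOp hX)

theorem TP.exists_maxTIdeal [IsNoetherianRing R] {H : Ideal R} (hH : IsTIdeal H)
    (hne : H ≠ ⊤) : ∃ M : Ideal R, IsMaxTIdeal M ∧ H ≤ M := by
  have hwf := (set_has_maximal_iff_noetherian (R := R) (M := R)).mpr inferInstance
  obtain ⟨M, hMs, hMmax⟩ := hwf {J : Submodule R R | J ≠ ⊤ ∧ IsTIdeal J ∧ H ≤ J}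
    ⟨H, hne, hH, le_rfl⟩
  refine ⟨M, ⟨hMs.1, hMs.2.1, fun J hJtop hJt hMJ => ?_⟩, hMs.2.2⟩
  by_contra hne'
  exact hMmax J ⟨hJtop, hJt, hMs.2.2.trans hMJ⟩ (lt_of_le_of_ne hMJ (Ne.symm hne'))

theorem TP.mem_of_coe_mem {I : Ideal R} {r : R}
    (h : algebraMap R (FractionRing R) r ∈ ((I : FracId R) : Submodule R (FractionRing R))) :
    r ∈ I := by
  obtain ⟨s, hs, hsr⟩ := (mem_coeIdeal _).mp (mem_coe.mp h)
  rwa [← IsFractionRing.injective R (FractionRing R) hsr]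

theorem TP.isPrime_of_isMaxTIdeal (M : Ideal R) (hM : IsMaxTIdeal M) : M.IsPrime := by
  refine ⟨hM.1, fun {a b} hab => ?_⟩
  by_cases ha : a ∈ M
  · exact Or.inl ha
  right
  by_cases hb0 : b = 0
  · exact hb0 ▸ M.zero_mem
  have ha0 : a ≠ 0 := fun h => ha (h ▸ M.zero_mem)
  set N : Ideal R := M ⊔ Ideal.span {a} with hNdef
  have haN : a ∈ N := Ideal.mem_sup_right (Ideal.mem_span_singleton_self a)
  have hN0 : (N : FracId R) ≠ 0 :=
    TP.coeIdeal_ne_zero'' (fun h => ha0 (by rw [h] at haN; exact haN))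
  have htN : tOp ((N : FracId R)) = ((1 : FracId R) : Submodule R (FractionRing R)) := by
    by_contra hne1
    obtain ⟨H, hHcoe, hHt, hHmax⟩ := TP.exists_tIdeal_of_tOp hN0 coeIdeal_le_one
    have hHtop : H ≠ ⊤ := by
      intro h
      apply hne1
      rw [← hHcoe, h, coeIdeal_top]
    have hMH : M ≤ H := hHmax M (coeIdeal_le_coeIdeal _ |>.mpr le_sup_left)
    have hHM : H = M := hM.2.2 H hHtop hHt hMH
    apply ha
    rw [← hHM]
    apply TP.mem_of_coe_mem
    rw [hHcoe]
    exact TP.le_tOp hN0 (mem_coe.mpr ((mem_coeIdeal _).mpr ⟨a, haN, rfl⟩))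
  -- now multiply by b
  have hγ : algebraMap R (FractionRing R) b ≠ 0 :=
    fun h => hb0 (IsFractionRing.to_map_eq_zero_iff.mp h)
  have h1 : (1 : FractionRing R) ∈ tOp ((N : FracId R)) := by
    rw [htN]; exact mem_coe.mpr (one_mem_one (nonZeroDivisors R))
  have h2 := TP.smul_mem_tOp hγ hN0 h1
  have hle2 : spanSingleton (nonZeroDivisors R) (algebraMap R (FractionRing R) b) *
      (N : FracId R) ≤ (M : FracId R) := by
    refine mul_le.mpr (fun x hx y hy => ?_)
    obtain ⟨r, hr⟩ := (mem_spanSingleton _).mp hx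
    obtain ⟨n, hnN, hny⟩ := (mem_coeIdeal _).mp hy
    have hbn : b * n ∈ M := by
      obtain ⟨m, hmM, s, hs, hmn⟩ := Submodule.mem_sup.mp hnN
      obtain ⟨c, hc⟩ := Ideal.mem_span_singleton'.mp hs
      have : b * n = b * m + c * (a * b) := by rw [← hmn, ← hc]; ring
      rw [this]
      exact M.add_mem (M.mul_mem_left b hmM) (M.mul_mem_left c hab)
    have hxy : x * y = r • algebraMap R (FractionRing R) (b * n) := by
      rw [← hr, ← hny, RingHom.map_mul, smul_mul_assoc]
    have hmem : algebraMap R (FractionRing R) (b * n) ∈ (M : FracId R) :=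
      (mem_coeIdeal _).mpr ⟨b * n, hbn, rfl⟩
    rw [hxy]
    exact mem_coe.mp (Submodule.smul_mem _ r (mem_coe.mpr hmem))
  have h3 : tOp (spanSingleton (nonZeroDivisors R) (algebraMap R (FractionRing R) b) *
      (N : FracId R)) ≤ tOp ((M : FracId R)) := TP.tOp_mono hle2
  rw [hM.2.1.2] at h3
  have h4 : algebraMap R (FractionRing R) b ∈ ((M : FracId R) : Submodule R (FractionRing R)) := by
    have h5 := h3 h2
    rwa [mul_one] at h5
  exact TP.mem_of_coe_mem h4

end ProofAux4



section ProofAux5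

open FractionalIdeal

variable {R : Type*} [CommRing R] [IsDomain R]

theorem TP.exists_strict_grow [IsNoetherianRing R] {E M : Ideal R} (hE : E ≠ ⊥) (hEM : E ≤ M)
    (hM : IsMaxTIdeal M)
    (hMt : tOp ((M : FracId R) * ((1 : FracId R) / (M : FracId R))) =
      ((1 : FracId R) : Submodule R (FractionRing R))) :
    ∃ F : Ideal R, E < F ∧
      (F : FracId R) = (E : FracId R) * ((1 : FracId R) / (M : FracId R)) := by
  have hMbot : M ≠ ⊥ := fun h => hE (le_bot_iff.mp (h ▸ hEM))
  have hM0 : (M : FracId R) ≠ 0 := TP.coeIdeal_ne_zero'' hMbot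
  have hE0 : (E : FracId R) ≠ 0 := TP.coeIdeal_ne_zero'' hE
  have hXle : (E : FracId R) * ((1 : FracId R) / (M : FracId R)) ≤ 1 :=
    le_trans (mul_left_mono (a := _) ((coeIdeal_le_coeIdeal (FractionRing R)).mpr hEM))
      mul_one_div_le_one
  obtain ⟨F, hF⟩ := le_one_iff_exists_coeIdeal.mp hXle
  have h1M : (1 : FracId R) ≤ (1 : FracId R) / (M : FracId R) :=
    (le_div_iff_mul_le hM0).mpr (by rw [one_mul]; exact coeIdeal_le_one)
  have hEF : E ≤ F := by
    refine (coeIdeal_le_coeIdeal (FractionRing R)).mp ?_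
    rw [hF]
    calc (E : FracId R) = (E : FracId R) * 1 := (mul_one _).symm
      _ ≤ (E : FracId R) * ((1 : FracId R) / (M : FracId R)) := mul_right_mono (a := _) h1M
  refine ⟨F, lt_of_le_of_ne hEF ?_, hF⟩
  intro hEFeq
  -- stable case: E * M⁻¹ = E
  have hstab : (E : FracId R) * ((1 : FracId R) / (M : FracId R)) = (E : FracId R) := by
    rw [← hF, ← hEFeq]
  -- find w ∈ M·M⁻¹ not in M
  have hMM : ¬ ((M : FracId R) * ((1 : FracId R) / (M : FracId R)) ≤ (M : FracId R)) := by
    intro hle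
    have h2 := TP.tOp_mono hle
    rw [hMt, hM.2.1.2] at h2
    have h3 : (1 : FractionRing R) ∈ ((M : FracId R) : Submodule R (FractionRing R)) :=
      h2 (mem_coe.mpr (one_mem_one (nonZeroDivisors R)))
    have h4 : (1 : R) ∈ M := TP.mem_of_coe_mem (by rwa [RingHom.map_one])
    exact hM.1 (Ideal.eq_top_iff_one M |>.mpr h4)
  obtain ⟨w, hwmem, hwnot⟩ := SetLike.not_le_iff_exists.mp hMM
  have hw1 : w ∈ (1 : FracId R) := mul_one_div_le_one hwmem
  obtain ⟨w₀, hw₀⟩ := (mem_one_iff _).mp hw1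
  have hw₀M : w₀ ∉ M := fun h => hwnot ((mem_coeIdeal _).mpr ⟨w₀, h, hw₀⟩)
  have hkey : spanSingleton (nonZeroDivisors R) w * (E : FracId R) ≤
      ((M * E : Ideal R) : FracId R) := by
    calc spanSingleton (nonZeroDivisors R) w * (E : FracId R)
        ≤ ((M : FracId R) * ((1 : FracId R) / (M : FracId R))) * (E : FracId R) :=
          mul_left_mono (a := _) (spanSingleton_le_iff_mem.mpr hwmem)
      _ = (M : FracId R) * ((E : FracId R) * ((1 : FracId R) / (M : FracId R))) := by ring
      _ = (M : FracId R) * (E : FracId R) := by rw [hstab]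
      _ = ((M * E : Ideal R) : FracId R) := (coeIdeal_mul M E).symm
  have hwE : ∀ e ∈ E, w₀ * e ∈ M * E := by
    intro e he
    have h2 : w * algebraMap R (FractionRing R) e ∈ ((M * E : Ideal R) : FracId R) :=
      hkey (mul_mem_mul (mem_spanSingleton_self _ w) ((mem_coeIdeal _).mpr ⟨e, he, rfl⟩))
    rw [← hw₀, ← RingHom.map_mul] at h2
    obtain ⟨r, hrm, hr⟩ := (mem_coeIdeal _).mp h2
    have := IsFractionRing.injective R (FractionRing R) hr
    rwa [← this]
  -- localize at M
  haveI hMp : M.IsPrime := TP.isPrime_of_isMaxTIdeal M hM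
  set Rm := Localization M.primeCompl with hRmdef
  set φ := algebraMap R Rm with hφdef
  have hunit : IsUnit (φ w₀) := IsLocalization.map_units Rm
    (⟨w₀, hw₀M⟩ : M.primeCompl)
  have hmap : Ideal.map φ E ≤ Ideal.map φ M * Ideal.map φ E := by
    rw [← Ideal.map_mul]
    refine Ideal.map_le_iff_le_comap.mpr (fun e he => ?_)
    have h5 : φ (w₀ * e) ∈ Ideal.map φ (M * E) := Ideal.mem_map_of_mem φ (hwE e he)
    have h6 : φ e = ↑hunit.unit⁻¹ * φ (w₀ * e) := by
      rw [RingHom.map_mul, ← mul_assoc, IsUnit.val_inv_mul, one_mul]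
    show φ e ∈ Ideal.map φ (M * E)
    rw [h6]
    exact Ideal.mul_mem_left _ _ h5
  haveI : IsNoetherianRing Rm := IsLocalization.isNoetherianRing M.primeCompl Rm inferInstance
  have hfg : (Ideal.map φ E).FG := IsNoetherian.noetherian _
  have hjac : Ideal.map φ M ≤ Ideal.jacobson ⊥ := by
    rw [Localization.AtPrime.map_eq_maximalIdeal, IsLocalRing.jacobson_eq_maximalIdeal ⊥
      bot_ne_top]
  have hbot : Ideal.map φ E = ⊥ :=
    Submodule.eq_bot_of_le_smul_of_le_jacobson_bot (Ideal.map φ M) _ hfg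
      (by rwa [smul_eq_mul]) hjac
  obtain ⟨e, heE, he0⟩ := Submodule.exists_mem_ne_zero_of_ne_bot hE
  have hφe : φ e = 0 := by
    rw [← Ideal.mem_bot, ← hbot]
    exact Ideal.mem_map_of_mem φ heE
  obtain ⟨⟨m, hm⟩, hme⟩ := (IsLocalization.map_eq_zero_iff M.primeCompl Rm e).mp hφe
  have hm0 : m ≠ 0 := fun h => hm (h ▸ M.zero_mem)
  exact he0 ((mul_eq_zero.mp hme).resolve_left hm0)

end ProofAux5



section ProofAux6

open FractionalIdeal

variable {R : Type*} [CommRing R] [IsDomain R]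

theorem TP.one_div_congr {A B : FracId R} (hA : A ≠ 0) (hB : B ≠ 0)
    (h : tOp A = tOp B) : (1 : FracId R) / A = (1 : FracId R) / B := by
  have key : ∀ {X Y : FracId R}, X ≠ 0 → Y ≠ 0 → tOp X ≤ tOp Y →
      (1 : FracId R) / Y ≤ (1 : FracId R) / X := by
    intro X Y hX hY hXY
    have h1 : X ≤ vOp Y :=
      coe_le_coe.mp (le_trans (le_trans (TP.le_tOp hX) hXY) (TP.tOp_le_vOp hY))
    have h2 := TP.div_anti hX h1
    rwa [TP.one_div_vOp hY] at h2
  exact le_antisymm (key hB hA h.ge) (key hA hB h.le)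

theorem TP.tInv_of_tOp_eq {E : Ideal R} {G : FracId R} (hE : E ≠ ⊥) (hG : G ≠ 0)
    (heq : tOp ((E : FracId R)) = tOp G)
    (hGinv : tOp (G * ((1 : FracId R) / G)) =
      ((1 : FracId R) : Submodule R (FractionRing R))) :
    IsTInvertible E := by
  have hE0 : (E : FracId R) ≠ 0 := TP.coeIdeal_ne_zero'' hE
  have hdiv : (1 : FracId R) / (E : FracId R) = (1 : FracId R) / G :=
    TP.one_div_congr hE0 hG heq
  refine ⟨hE, ?_⟩
  rw [hdiv]
  have h1 : tOp (((1 : FracId R) / G) * (E : FracId R)) =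
      tOp (((1 : FracId R) / G) * G) :=
    TP.tOp_mul_congr (TP.one_div_ne_zero hG) hE0 hG heq
  rw [mul_comm ((E : FracId R)) ((1 : FracId R) / G), h1,
    mul_comm ((1 : FracId R) / G) G, hGinv]

theorem TP.tOp_mul_oneDiv_self {F M : Ideal R} (hF : F ≠ ⊥) (hM : M ≠ ⊥)
    (hFt : tOp ((F : FracId R) * ((1 : FracId R) / (F : FracId R))) =
      ((1 : FracId R) : Submodule R (FractionRing R)))
    (hMt : tOp ((M : FracId R) * ((1 : FracId R) / (M : FracId R))) =
      ((1 : FracId R) : Submodule R (FractionRing R))) :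
    tOp (((F : FracId R) * (M : FracId R)) *
      ((1 : FracId R) / ((F : FracId R) * (M : FracId R)))) =
      ((1 : FracId R) : Submodule R (FractionRing R)) := by
  have hF0 : (F : FracId R) ≠ 0 := TP.coeIdeal_ne_zero'' hF
  have hM0 : (M : FracId R) ≠ 0 := TP.coeIdeal_ne_zero'' hM
  have hG0 : (F : FracId R) * (M : FracId R) ≠ 0 := TP.mul_ne_zero' hF0 hM0
  have hdF : ((1 : FracId R) / (F : FracId R)) * (F : FracId R) ≤ 1 := by
    rw [mul_comm]; exact mul_one_div_le_one
  have hdM : ((1 : FracId R) / (M : FracId R)) * (M : FracId R) ≤ 1 := by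
    rw [mul_comm]; exact mul_one_div_le_one
  have hdiv2 : ((1 : FracId R) / (M : FracId R)) * ((1 : FracId R) / (F : FracId R)) ≤
      (1 : FracId R) / ((F : FracId R) * (M : FracId R)) := by
    rw [le_div_iff_mul_le hG0]
    calc ((1 : FracId R) / (M : FracId R)) * ((1 : FracId R) / (F : FracId R)) *
          ((F : FracId R) * (M : FracId R))
        = (((1 : FracId R) / (M : FracId R)) * (M : FracId R)) *
          (((1 : FracId R) / (F : FracId R)) * (F : FracId R)) := by ring
      _ ≤ 1 * (((1 : FracId R) / (F : FracId R)) * (F : FracId R)) := mul_left_mono (a := _) hdM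
      _ ≤ 1 * 1 := mul_right_mono (a := _) hdF
      _ = 1 := mul_one 1
  have hTle : ((M : FracId R) * ((1 : FracId R) / (M : FracId R))) *
      ((F : FracId R) * ((1 : FracId R) / (F : FracId R))) ≤
      ((F : FracId R) * (M : FracId R)) *
        ((1 : FracId R) / ((F : FracId R) * (M : FracId R))) := by
    calc ((M : FracId R) * ((1 : FracId R) / (M : FracId R))) *
          ((F : FracId R) * ((1 : FracId R) / (F : FracId R)))
        = ((F : FracId R) * (M : FracId R)) *
          (((1 : FracId R) / (M : FracId R)) * ((1 : FracId R) / (F : FracId R))) := by ring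
      _ ≤ _ := mul_right_mono (a := _) hdiv2
  have hMM0 : (M : FracId R) * ((1 : FracId R) / (M : FracId R)) ≠ 0 :=
    TP.mul_ne_zero' hM0 (TP.one_div_ne_zero hM0)
  have hFF0 : (F : FracId R) * ((1 : FracId R) / (F : FracId R)) ≠ 0 :=
    TP.mul_ne_zero' hF0 (TP.one_div_ne_zero hF0)
  have hcongr : tOp (((M : FracId R) * ((1 : FracId R) / (M : FracId R))) *
      ((F : FracId R) * ((1 : FracId R) / (F : FracId R)))) =
      tOp (((M : FracId R) * ((1 : FracId R) / (M : FracId R))) * 1) := by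
    refine TP.tOp_mul_congr hMM0 hFF0 (one_ne_zero' (FracId R)) ?_
    rw [hFt, TP.tOp_one]
  rw [mul_one] at hcongr
  rw [hMt] at hcongr
  refine le_antisymm (TP.tOp_le_one mul_one_div_le_one) ?_
  rw [← hcongr]
  exact TP.tOp_mono hTle

theorem TP.all_tInvertible [IsNoetherianRing R] (h : TSuperPotentDomain R) :
    ∀ E : Ideal R, E ≠ ⊥ → IsTInvertible E := by
  intro E
  induction E using IsNoetherian.induction with
  | _ E ih =>
  intro hE
  by_contra hni
  have hE0 : (E : FracId R) ≠ 0 := TP.coeIdeal_ne_zero'' hE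
  have hX0 : (E : FracId R) * ((1 : FracId R) / (E : FracId R)) ≠ 0 :=
    TP.mul_ne_zero' hE0 (TP.one_div_ne_zero hE0)
  have hT : tOp ((E : FracId R) * ((1 : FracId R) / (E : FracId R))) ≠
      ((1 : FracId R) : Submodule R (FractionRing R)) := fun hq => hni ⟨hE, hq⟩
  obtain ⟨H, hHcoe, hHt, hHge⟩ := TP.exists_tIdeal_of_tOp hX0 mul_one_div_le_one
  have hEH : E ≤ H := hHge E (le_self_mul_one_div coeIdeal_le_one)
  have hHtop : H ≠ ⊤ := fun h0 => hT (by rw [← hHcoe, h0, coeIdeal_top])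
  obtain ⟨M, hM, hHM⟩ := TP.exists_maxTIdeal hHt hHtop
  have hEM : E ≤ M := hEH.trans hHM
  obtain ⟨_, I, hIsr, hIM⟩ := h M hM
  have hMinv : IsTInvertible M := hIsr.2 M (IsNoetherian.noetherian M) hIM
  obtain ⟨F, hEFlt, hFcoe⟩ := TP.exists_strict_grow hE hEM hM hMinv.2
  have hFne : F ≠ ⊥ := fun h0 => hE (le_bot_iff.mp (h0 ▸ hEFlt.le))
  have hFinv : IsTInvertible F := ih F hEFlt hFne
  have hM0 : (M : FracId R) ≠ 0 := TP.coeIdeal_ne_zero'' hMinv.1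
  have hF0 : (F : FracId R) ≠ 0 := TP.coeIdeal_ne_zero'' hFne
  have hG0 : (F : FracId R) * (M : FracId R) ≠ 0 := TP.mul_ne_zero' hF0 hM0
  -- tOp (E) = tOp (F*M)
  have hFM : (F : FracId R) * (M : FracId R) =
      (E : FracId R) * (((1 : FracId R) / (M : FracId R)) * (M : FracId R)) := by
    rw [hFcoe]; ring
  have hYeq : tOp (((1 : FracId R) / (M : FracId R)) * (M : FracId R)) =
      tOp (1 : FracId R) := by
    rw [mul_comm, hMinv.2, TP.tOp_one]
  have heq : tOp ((E : FracId R)) = tOp ((F : FracId R) * (M : FracId R)) := by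
    rw [hFM]
    have := TP.tOp_mul_congr hE0
      (TP.mul_ne_zero' (TP.one_div_ne_zero hM0) hM0) (one_ne_zero' (FracId R)) hYeq
    rw [this, mul_one]
  exact hni (TP.tInv_of_tOp_eq hE hG0 heq
    (TP.tOp_mul_oneDiv_self hFne hMinv.1 hFinv.2 hMinv.2))

end ProofAux6


/-- A Noetherian `t`-super potent domain is a Krull domain, equivalently (being
Noetherian) it is integrally closed in its quotient field. -/
theorem noetherian_tSuperPotent_integrallyClosed {R : Type*} [CommRing R] [IsDomain R]
    [IsNoetherianRing R] (h : TSuperPotentDomain R) : IsIntegrallyClosed R := by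
  have hinv := TP.all_tInvertible h
  rw [isIntegrallyClosed_iff (FractionRing R)]
  intro u hu
  by_cases hu0 : u = 0
  · exact ⟨0, by rw [RingHom.map_zero, hu0]⟩
  set A : FracId R := adjoinIntegral (nonZeroDivisors R) u hu with hAdef
  have hcoeA : (A : Submodule R (FractionRing R)) =
      Subalgebra.toSubmodule (Algebra.adjoin R ({u} : Set (FractionRing R))) := rfl
  have huA : u ∈ A := mem_adjoinIntegral_self _ u hu
  have hA0 : A ≠ 0 := fun h0 => hu0 (by rw [h0] at huA; exact (mem_zero_iff _).mp huA)
  have hmulA : ∀ y ∈ A, u * y ∈ A := by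
    intro y hy
    have hy' : y ∈ Algebra.adjoin R ({u} : Set (FractionRing R)) :=
      Subalgebra.mem_toSubmodule _ |>.mp (hcoeA ▸ mem_coe.mpr hy)
    have : u * y ∈ Algebra.adjoin R ({u} : Set (FractionRing R)) :=
      mul_mem (Algebra.self_mem_adjoin_singleton R u) hy'
    exact mem_coe.mp (hcoeA ▸ (Subalgebra.mem_toSubmodule _ |>.mpr this))
  have hA1 : (1 : FracId R) ≤ A := by
    rw [← coe_le_coe, coe_one, Submodule.one_le, hcoeA]
    exact Subalgebra.mem_toSubmodule _ |>.mpr (Subalgebra.one_mem _)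
  set c : FracId R := (1 : FracId R) / A with hcdef
  have hc0 : c ≠ 0 := TP.one_div_ne_zero hA0
  have hcle1 : c ≤ 1 := by
    have h1 := TP.div_anti (one_ne_zero' (FracId R)) hA1
    rwa [FractionalIdeal.div_one] at h1
  obtain ⟨C, hC⟩ := le_one_iff_exists_coeIdeal.mp hcle1
  have hCbot : C ≠ ⊥ := by
    intro h0
    apply hc0
    rw [← hC, h0]
    exact coeIdeal_bot
  have htC : tOp (c * ((1 : FracId R) / c)) =
      ((1 : FracId R) : Submodule R (FractionRing R)) := by
    have h2 := (hinv C hCbot).2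
    rwa [hC] at h2
  have huc : spanSingleton (nonZeroDivisors R) u * c ≤ c := by
    refine mul_le.mpr (fun x hx z hz => ?_)
    obtain ⟨r, hr⟩ := (mem_spanSingleton _).mp hx
    show x * z ∈ (1 : FracId R) / A
    refine (mem_div_iff_of_ne_zero hA0).mpr (fun y hy => ?_)
    have h1 : z * (u * y) ∈ (1 : FracId R) :=
      (mem_div_iff_of_ne_zero hA0).mp hz (u * y) (hmulA y hy)
    have h2 : x * z * y = r • (z * (u * y)) := by
      rw [← hr, smul_mul_assoc, smul_mul_assoc]; congr 1; ring
    rw [h2]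
    exact mem_coe.mp (Submodule.smul_mem _ r (mem_coe.mpr h1))
  have hstab : spanSingleton (nonZeroDivisors R) u * (c * ((1 : FracId R) / c)) ≤
      c * ((1 : FracId R) / c) := by
    rw [← mul_assoc]
    exact mul_left_mono (a := _) huc
  have hX0 : c * ((1 : FracId R) / c) ≠ 0 := TP.mul_ne_zero' hc0 (TP.one_div_ne_zero hc0)
  have h1 : (1 : FractionRing R) ∈ tOp (c * ((1 : FracId R) / c)) := by
    rw [htC]; exact mem_coe.mpr (one_mem_one (nonZeroDivisors R))
  have h2 := TP.smul_mem_tOp hu0 hX0 h1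
  rw [mul_one] at h2
  have h3 := TP.tOp_mono hstab h2
  rw [htC] at h3
  obtain ⟨r, hr⟩ := (mem_one_iff _).mp (mem_coe.mp h3)
  exact ⟨r, hr⟩
end

section
/- Let M, N, P be prime ideals of an integral domain R with P ⊆ M ∩ N. Assume that PR_M is divided in R_M (equivalently, PR_M = PR_P as subsets of the quotient field), that R_M/PR_M is a valuation domain, and that R_N is a valuation domain. Then R_M is a valuation domain. -/
open FractionalIdeal

/-- If `P ⊆ M ∩ N` are primes, `P R_M` is divided in `R_M`, `R_M / P R_M` is a
valuation domain, and `R_N` is a valuation domain, then `R_M` is a valuation domain. -/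
theorem valuation_of_divided_belongs {R : Type*} [CommRing R] [IsDomain R]
    (M N P : Ideal R) [M.IsPrime] [N.IsPrime] (hP : P.IsPrime) (hPMN : P ≤ M ⊓ N)
    (hdiv : IsDividedIdeal (P.map (algebraMap R (Localization.AtPrime M))))
    (hquot : IsValuationDomain
      (Localization.AtPrime M ⧸ P.map (algebraMap R (Localization.AtPrime M))))
    (hN : IsValuationDomain (Localization.AtPrime N)) :
    IsValuationDomain (Localization.AtPrime M) := by
    classical
  set S := Localization.AtPrime M with hSdef
  set φ : R →+* S := algebraMap R S with hφdef
  set P' : Ideal S := P.map (algebraMap R S) with hP'def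
  have hPM : P ≤ M := le_trans hPMN inf_le_left
  have hPN : P ≤ N := le_trans hPMN inf_le_right
  have hdisj : Disjoint ((M.primeCompl : Submonoid R) : Set R) (P : Set R) :=
    Set.disjoint_left.mpr (fun x hx hxP => hx (hPM hxP))
  have hcomap : ∀ x : R, φ x ∈ P' ↔ x ∈ P := by
    intro x
    have h := IsLocalization.comap_map_of_isPrime_disjoint M.primeCompl S hP hdisj
    constructor
    · intro hx
      have : x ∈ P'.comap (algebraMap R S) := hx
      rw [← h]; exact this
    · intro hx; exact Ideal.mem_map_of_mem _ hx
  have hinj : Function.Injective φ :=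
    IsLocalization.injective S M.primeCompl_le_nonZeroDivisors
  -- lifting lemma
  have lift : ∀ x y : S, y ∉ P' →
      (Ideal.Quotient.mk P' y ∣ Ideal.Quotient.mk P' x) → y ∣ x := by
    rintro x y hy ⟨c', hc⟩
    obtain ⟨c, rfl⟩ := Ideal.Quotient.mk_surjective c'
    have hmem : x - y * c ∈ P' := by
      rw [← Ideal.Quotient.eq, _root_.map_mul]; exact hc
    obtain ⟨z, hz, hxz⟩ := hdiv _ hmem y hy
    exact ⟨c + z, by rw [mul_add]; linear_combination hxz⟩
  -- key claim for the case a, b ∈ P'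
  have claim : ∀ a b : S, ∀ m n : R, n ∉ P → b * φ n = a * φ m → a ∣ b ∨ b ∣ a := by
    intro a b m n hn hstar
    have hn0 : n ≠ 0 := fun h => hn (h ▸ P.zero_mem)
    have hφn0 : φ n ≠ 0 := fun h => hn0 (hinj (h.trans (_root_.map_zero φ).symm))
    have hφnP' : φ n ∉ P' := fun h => hn ((hcomap n).mp h)
    by_cases hm : m ∈ P
    · -- φ n divides φ m
      obtain ⟨c, hc⟩ := lift (φ m) (φ n) hφnP'
        (by rw [Ideal.Quotient.eq_zero_iff_mem.mpr ((hcomap m).mpr hm)]; exact dvd_zero _)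
      left
      refine ⟨c, mul_left_cancel₀ hφn0 ?_⟩
      rw [hc] at hstar
      linear_combination hstar
    · have hm0 : m ≠ 0 := fun h => hm (h ▸ P.zero_mem)
      have hφm0 : φ m ≠ 0 := fun h => hm0 (hinj (h.trans (_root_.map_zero φ).symm))
      have hφmP' : φ m ∉ P' := fun h => hm ((hcomap m).mp h)
      rcases hquot.2 (Ideal.Quotient.mk P' (φ m)) (Ideal.Quotient.mk P' (φ n)) with hd | hd
      · -- φ m ∣ φ n
        obtain ⟨c, hc⟩ := lift (φ n) (φ m) hφmP' hd
        right
        refine ⟨c, mul_left_cancel₀ hφm0 ?_⟩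
        rw [hc] at hstar
        linear_combination -hstar
      · -- φ n ∣ φ m
        obtain ⟨c, hc⟩ := lift (φ m) (φ n) hφnP' hd
        left
        refine ⟨c, mul_left_cancel₀ hφn0 ?_⟩
        rw [hc] at hstar
        linear_combination hstar
  -- derivation of the relation b * φ n = a * φ m from divisibility in R_N
  have claim2 : ∀ (x y : S) (p q : R) (s t : M.primeCompl),
      x * φ s = φ p → y * φ t = φ q →
      (algebraMap R (Localization.AtPrime N) (p * t) ∣
        algebraMap R (Localization.AtPrime N) (q * s)) →
      ∃ m n : R, n ∉ P ∧ y * φ n = x * φ m := by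
    rintro x y p q s t hx hy ⟨u, hu⟩
    set ψ : R →+* Localization.AtPrime N := algebraMap R (Localization.AtPrime N)
    obtain ⟨⟨m, n⟩, hmn⟩ := IsLocalization.surj N.primeCompl u
    have hinjN : Function.Injective ψ :=
      IsLocalization.injective _ N.primeCompl_le_nonZeroDivisors
    have hu' : ψ q * ψ s = ψ p * ψ t * u := by
      have h2 := hu
      simp only [_root_.map_mul] at h2
      exact h2
    have hR : q * s * n = p * t * m := by
      apply hinjN
      simp only [_root_.map_mul]
      linear_combination hu' * ψ n + hmn * (ψ p * ψ t)
    refine ⟨m, n, fun h => n.2 (hPN h), ?_⟩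
    have hst0 : φ s * φ t ≠ 0 := by
      have hs0 : (s : R) ≠ 0 := fun h => s.2 (h ▸ M.zero_mem)
      have ht0 : (t : R) ≠ 0 := fun h => t.2 (h ▸ M.zero_mem)
      exact mul_ne_zero (fun h => hs0 (hinj (h.trans (_root_.map_zero φ).symm)))
        (fun h => ht0 (hinj (h.trans (_root_.map_zero φ).symm)))
    apply mul_right_cancel₀ hst0
    have := congrArg φ hR
    simp only [_root_.map_mul] at this
    calc y * φ n * (φ s * φ t) = (y * φ t) * φ s * φ n := by ring
      _ = φ q * φ s * φ n := by rw [hy]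
      _ = φ p * φ t * φ m := by linear_combination this
      _ = (x * φ s) * φ t * φ m := by rw [hx]
      _ = x * φ m * (φ s * φ t) := by ring
  refine ⟨inferInstance, ?_⟩
  intro a b
  by_cases ha : a ∈ P'
  · by_cases hb : b ∈ P'
    · obtain ⟨⟨p₁, s₁⟩, hps₁⟩ :=
        (IsLocalization.mem_map_algebraMap_iff M.primeCompl S).mp ha
      obtain ⟨⟨p₂, s₂⟩, hps₂⟩ :=
        (IsLocalization.mem_map_algebraMap_iff M.primeCompl S).mp hb
      rcases hN.2 (algebraMap R (Localization.AtPrime N) ((p₁ : R) * s₂))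
          (algebraMap R (Localization.AtPrime N) ((p₂ : R) * s₁)) with hd | hd
      · obtain ⟨m, n, hn, hstar⟩ := claim2 a b p₁ p₂ s₁ s₂ hps₁ hps₂ hd
        exact claim a b m n hn hstar
      · obtain ⟨m, n, hn, hstar⟩ := claim2 b a p₂ p₁ s₂ s₁ hps₂ hps₁ hd
        exact (claim b a m n hn hstar).symm
    · obtain ⟨y, hy, hxy⟩ := hdiv a ha b hb
      exact Or.inr ⟨y, hxy⟩
  · by_cases hb : b ∈ P'
    · obtain ⟨y, hy, hxy⟩ := hdiv b hb a ha
      exact Or.inl ⟨y, hxy⟩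
    · rcases hquot.2 (Ideal.Quotient.mk P' a) (Ideal.Quotient.mk P' b) with hd | hd
      · exact Or.inl (lift b a ha hd)
      · exact Or.inr (lift a b hb hd)
end

section
/- Let ⋆ be a finite-type star operation on an integral domain R. Assume that every maximal ⋆-ideal of R has height one and that R is ⋆-potent. Then R has finite ⋆-character: every nonzero element of R lies in only finitely many maximal ⋆-ideals of R. -/
open FractionalIdeal

namespace StarCharAux

open FractionalIdeal

set_option linter.unusedSectionVars false

variable {R : Type*} [CommRing R] [IsDomain R]

theorem exists_mem_ne_zero {I : FracId R} (h : I ≠ 0) : ∃ x ∈ I, x ≠ 0 := by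
  have h' : (I : Submodule R (FractionRing R)) ≠ ⊥ := FractionalIdeal.coeToSubmodule_ne_bot.mpr h
  obtain ⟨x, hx, hx0⟩ := Submodule.exists_mem_ne_zero_of_ne_bot h'
  exact ⟨x, hx, hx0⟩

theorem mul_ne_zero' {I J : FracId R} (hI : I ≠ 0) (hJ : J ≠ 0) : I * J ≠ 0 := by
  obtain ⟨x, hx, hx0⟩ := exists_mem_ne_zero hI
  obtain ⟨y, hy, hy0⟩ := exists_mem_ne_zero hJ
  intro h
  have hxy : x * y ∈ I * J := FractionalIdeal.mul_mem_mul hx hy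
  rw [h, FractionalIdeal.mem_zero_iff] at hxy
  exact mul_ne_zero hx0 hy0 hxy

theorem coeIdeal_ne_zero_iff {I : Ideal R} : (I : FracId R) ≠ 0 ↔ I ≠ ⊥ :=
  FractionalIdeal.coeIdeal_ne_zero' le_rfl

theorem one_ne_zero' : (1 : FracId R) ≠ 0 := by
  intro h
  have h1 : (1 : FractionRing R) ∈ (1 : FracId R) := FractionalIdeal.one_mem_one _
  rw [h, FractionalIdeal.mem_zero_iff] at h1
  exact one_ne_zero h1

theorem star_ne_zero (s : StarOp R) {I : FracId R} (hI : I ≠ 0) : s.star I ≠ 0 := by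
  obtain ⟨x, hx, hx0⟩ := exists_mem_ne_zero hI
  intro h
  have hx' : x ∈ s.star I := s.le_star I hI hx
  rw [h] at hx'
  exact hx0 ((FractionalIdeal.mem_zero_iff _).mp hx')

theorem star_mul_le (s : StarOp R) {I J : FracId R} (hI : I ≠ 0) (hJ : J ≠ 0) :
    s.star I * J ≤ s.star (I * J) := by
  refine FractionalIdeal.mul_le.mpr fun i hi j hj => ?_
  rcases eq_or_ne j 0 with rfl | hj0
  · rw [mul_zero]; exact zero_mem _
  have h1 : spanSingleton (nonZeroDivisors R) j * I ≤ I * J := by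
    refine FractionalIdeal.mul_le.mpr fun x hx y hy => ?_
    obtain ⟨z, rfl⟩ := (FractionalIdeal.mem_spanSingleton _).mp hx
    rw [smul_mul_assoc, mul_comm j y]
    exact Submodule.smul_mem _ z (FractionalIdeal.mul_mem_mul hy hj)
  have h2 := s.star_mono _ _
    (mul_ne_zero' ((FractionalIdeal.spanSingleton_ne_zero_iff).mpr hj0) hI)
    (mul_ne_zero' hI hJ) h1
  rw [s.star_smul j hj0 I hI] at h2
  refine h2 ?_
  have hm := FractionalIdeal.mul_mem_mul (FractionalIdeal.mem_spanSingleton_self (nonZeroDivisors R) j) hi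
  rwa [mul_comm j i] at hm

theorem star_mul_star_le (s : StarOp R) {I J : FracId R} (hI : I ≠ 0) (hJ : J ≠ 0) :
    s.star I * s.star J ≤ s.star (I * J) := by
  refine FractionalIdeal.mul_le.mpr fun i hi j hj => ?_
  rcases eq_or_ne i 0 with rfl | hi0
  · rw [zero_mul]; exact zero_mem _
  have hIJ0 : I * J ≠ 0 := mul_ne_zero' hI hJ
  have h1 : spanSingleton (nonZeroDivisors R) i * J ≤ s.star (I * J) := by
    refine le_trans ?_ (star_mul_le s hI hJ)
    refine FractionalIdeal.mul_le.mpr fun x hx y hy => ?_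
    obtain ⟨z, rfl⟩ := (FractionalIdeal.mem_spanSingleton _).mp hx
    rw [smul_mul_assoc]
    exact Submodule.smul_mem _ z (FractionalIdeal.mul_mem_mul hi hy)
  have h2 := s.star_mono _ _
    (mul_ne_zero' ((FractionalIdeal.spanSingleton_ne_zero_iff).mpr hi0) hJ)
    (star_ne_zero s hIJ0) h1
  rw [s.star_smul i hi0 J hJ, s.star_idem _ hIJ0] at h2
  exact h2 (FractionalIdeal.mul_mem_mul (FractionalIdeal.mem_spanSingleton_self _ i) hj)

theorem star_coeIdeal_le_one (s : StarOp R) {I : Ideal R} (hI : I ≠ ⊥) :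
    s.star (I : FracId R) ≤ 1 := by
  have h := s.star_mono _ _ (coeIdeal_ne_zero_iff.mpr hI) one_ne_zero'
    FractionalIdeal.coeIdeal_le_one
  rwa [s.star_one] at h

end StarCharAux
namespace StarCharAux

open FractionalIdeal

set_option linter.unusedSectionVars false

variable {R : Type*} [CommRing R] [IsDomain R]

theorem exists_finset_span {J : FracId R} (hle : J ≤ 1)
    (hfg : (J : Submodule R (FractionRing R)).FG) :
    ∃ t : Finset R, J = ((Ideal.span (↑t) : Ideal R) : FracId R) := by
  classical
  obtain ⟨T, hT⟩ := hfg
  have hmem : ∀ y ∈ T, ∃ r : R, algebraMap R (FractionRing R) r = y := by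
    intro y hy
    have hyJ : y ∈ J := by
      have h1 : y ∈ (J : Submodule R (FractionRing R)) := hT ▸ Submodule.subset_span hy
      exact h1
    exact (FractionalIdeal.mem_one_iff _).mp (hle hyJ)
  choose f hf using hmem
  set t : Finset R := T.attach.image fun y => f y.1 y.2 with ht
  have hft : ∀ y (hy : y ∈ T), f y hy ∈ t := by
    intro y hy
    exact Finset.mem_image.mpr ⟨⟨y, hy⟩, Finset.mem_attach _ _, rfl⟩
  refine ⟨t, le_antisymm (fun y hy => ?_) (fun z hz => ?_)⟩
  · have hyT : y ∈ Submodule.span R (↑T : Set (FractionRing R)) := by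
      rw [hT]; exact hy
    refine Submodule.span_induction ?_ ?_ ?_ ?_ hyT
    · intro x hx
      have hxT : x ∈ T := hx
      exact (FractionalIdeal.mem_coeIdeal _).mpr
        ⟨f x hxT, Ideal.subset_span (hft x hxT), hf x hxT⟩
    · exact Submodule.zero_mem _
    · intro u v _ _ hu hv; exact Submodule.add_mem _ hu hv
    · intro c u _ hu; exact Submodule.smul_mem _ c hu
  · obtain ⟨r, hr, rfl⟩ := (FractionalIdeal.mem_coeIdeal _).mp hz
    refine Submodule.span_induction (p := fun r _ => algebraMap R (FractionRing R) r ∈ J) ?_ ?_ ?_ ?_ hr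
    · intro x hx
      obtain ⟨z, _, rfl⟩ := Finset.mem_image.mp hx
      rw [hf z.1 z.2]
      have h1 : (z.1 : FractionRing R) ∈ (J : Submodule R (FractionRing R)) :=
        hT ▸ Submodule.subset_span z.2
      exact h1
    · show algebraMap R (FractionRing R) 0 ∈ J
      rw [_root_.map_zero]; exact Submodule.zero_mem _
    · intro u v _ _ hu hv; rw [_root_.map_add]; exact Submodule.add_mem _ hu hv
    · intro c u _ hu
      rw [smul_eq_mul, _root_.map_mul, ← Algebra.smul_def]
      exact Submodule.smul_mem _ c hu

theorem finset_subset_chain_mem {c : Set (Ideal R)} (hchain : IsChain (· ≤ ·) c)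
    {y : Ideal R} (hy : y ∈ c) (t : Finset R) (h : ∀ x ∈ t, ∃ I ∈ c, x ∈ I) :
    ∃ I ∈ c, ∀ x ∈ t, x ∈ I := by
  classical
  induction t using Finset.induction_on with
  | empty => exact ⟨y, hy, fun x hx => absurd hx (Finset.notMem_empty x)⟩
  | @insert a u ha ih =>
    obtain ⟨I₁, hI₁c, hI₁⟩ := ih fun x hx => h x (Finset.mem_insert_of_mem hx)
    obtain ⟨I₂, hI₂c, hI₂⟩ := h a (Finset.mem_insert_self a u)
    rcases hchain.total hI₁c hI₂c with h12 | h21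
    · refine ⟨I₂, hI₂c, fun x hx => ?_⟩
      rcases Finset.mem_insert.mp hx with rfl | hx
      · exact hI₂
      · exact h12 (hI₁ x hx)
    · refine ⟨I₁, hI₁c, fun x hx => ?_⟩
      rcases Finset.mem_insert.mp hx with rfl | hx
      · exact h21 hI₂
      · exact hI₁ x hx

end StarCharAux
namespace StarCharAux

open FractionalIdeal

set_option linter.unusedSectionVars false
set_option maxHeartbeats 1000000

variable {R : Type*} [CommRing R] [IsDomain R]

theorem isPrime_of_isMaxStarIdeal {s : StarOp R} {M : Ideal R} (hM : s.IsMaxStarIdeal M) :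
    M.IsPrime := by
  obtain ⟨hMt, hMs, hmax⟩ := hM
  refine ⟨hMt, ?_⟩
  intro a b hab
  by_contra hc
  push_neg at hc
  obtain ⟨ha, hb⟩ := hc
  have hM0 : (M : FracId R) ≠ 0 := coeIdeal_ne_zero_iff.mpr hMs.1
  have key : ∀ x : R, x ∉ M →
      (1 : FractionRing R) ∈ s.star ((M ⊔ Ideal.span {x} : Ideal R) : FracId R) := by
    intro x hx
    have hAbot : (M ⊔ Ideal.span {x} : Ideal R) ≠ ⊥ := fun h =>
      hMs.1 (eq_bot_iff.mpr (h ▸ le_sup_left (b := Ideal.span {x})))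
    have hA0 : ((M ⊔ Ideal.span {x} : Ideal R) : FracId R) ≠ 0 := coeIdeal_ne_zero_iff.mpr hAbot
    obtain ⟨J₁, hJ₁⟩ := le_one_iff_exists_coeIdeal.mp (star_coeIdeal_le_one s hAbot)
    by_cases hJt : J₁ = ⊤
    · rw [← hJ₁, hJt]
      exact (FractionalIdeal.mem_coeIdeal _).mpr ⟨1, trivial, _root_.map_one _⟩
    · exfalso
      have hJ₁0 : (J₁ : FracId R) ≠ 0 := by
        rw [hJ₁]
        exact star_ne_zero s hA0
      have hstar : s.IsStarIdeal J₁ :=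
        ⟨coeIdeal_ne_zero_iff.mp hJ₁0, by rw [hJ₁, s.star_idem _ hA0]⟩
      have hMJ : M ≤ J₁ := by
        rw [← coeIdeal_le_coeIdeal (FractionRing R)]
        refine le_trans ?_ (hJ₁ ▸ s.le_star _ hA0)
        exact (coeIdeal_le_coeIdeal (FractionRing R)).mpr le_sup_left
      have hJM : J₁ = M := hmax J₁ hJt hstar hMJ
      have h2 : ((M ⊔ Ideal.span {x} : Ideal R) : FracId R) ≤ (J₁ : FracId R) :=
        hJ₁ ▸ s.le_star _ hA0
      have h3 : (M ⊔ Ideal.span {x} : Ideal R) ≤ J₁ := (coeIdeal_le_coeIdeal (FractionRing R)).mp h2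
      exact hx (hJM ▸ h3 (Submodule.mem_sup_right (Ideal.subset_span rfl)))
  have h1 := key a ha
  have h2 := key b hb
  set A : Ideal R := M ⊔ Ideal.span {a} with hA
  set B : Ideal R := M ⊔ Ideal.span {b} with hB
  have hA0 : (A : FracId R) ≠ 0 :=
    coeIdeal_ne_zero_iff.mpr fun h => hMs.1 (eq_bot_iff.mpr (h ▸ le_sup_left))
  have hB0 : (B : FracId R) ≠ 0 :=
    coeIdeal_ne_zero_iff.mpr fun h => hMs.1 (eq_bot_iff.mpr (h ▸ le_sup_left))
  have hprod : (A : FracId R) * (B : FracId R) ≤ (M : FracId R) := by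
    rw [← FractionalIdeal.coeIdeal_mul, coeIdeal_le_coeIdeal (FractionRing R)]
    refine Ideal.mul_le.mpr ?_
    intro r hr q hq
    obtain ⟨m, hm, c, hc, rfl⟩ := Submodule.mem_sup.mp hr
    obtain ⟨m', hm', c', hc', rfl⟩ := Submodule.mem_sup.mp hq
    obtain ⟨z, rfl⟩ := Ideal.mem_span_singleton'.mp hc
    obtain ⟨w, rfl⟩ := Ideal.mem_span_singleton'.mp hc'
    have heq : (m + z * a) * (m' + w * b) =
        m * (m' + w * b) + (z * a) * m' + (z * w) * (a * b) := by ring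
    rw [heq]
    exact Ideal.add_mem _ (Ideal.add_mem _ (Ideal.mul_mem_right _ _ hm)
      (Ideal.mul_mem_left _ _ hm')) (Ideal.mul_mem_left _ _ hab)
  have hmem : (1 : FractionRing R) ∈ s.star ((A : FracId R) * (B : FracId R)) := by
    have := FractionalIdeal.mul_mem_mul h1 h2
    rw [one_mul] at this
    exact star_mul_star_le s hA0 hB0 this
  have hfin : (1 : FractionRing R) ∈ (M : FracId R) := by
    have hle := s.star_mono _ _ (mul_ne_zero' hA0 hB0) hM0 hprod
    rw [hMs.2] at hle
    exact hle hmem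
  obtain ⟨r, hrM, hr⟩ := (FractionalIdeal.mem_coeIdeal _).mp hfin
  have : r = 1 := IsFractionRing.injective R (FractionRing R) (by rw [hr, _root_.map_one])
  exact hMt (Ideal.eq_top_iff_one M |>.mpr (this ▸ hrM))

theorem exists_max_star_ideal (s : StarOp R) (hft : s.FiniteType) {N : Ideal R}
    (hN : s.IsStarIdeal N) (hNt : N ≠ ⊤) :
    ∃ M : Ideal R, s.IsMaxStarIdeal M ∧ N ≤ M := by
  set 𝒮 : Set (Ideal R) := {J | J ≠ ⊤ ∧ s.IsStarIdeal J ∧ N ≤ J} with h𝒮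
  have hzorn : ∃ m, N ≤ m ∧ Maximal (· ∈ 𝒮) m := by
    refine zorn_le_nonempty₀ 𝒮 ?_ N ⟨hNt, hN, le_rfl⟩
    intro c hcS hchain y hy
    have hdir := hchain.directedOn
    have hNc : N ≤ sSup c := le_trans (hcS hy).2.2 (le_sSup hy)
    have hmem : ∀ x, x ∈ sSup c → ∃ J ∈ c, x ∈ J := fun x hx =>
      (Submodule.mem_sSup_of_directed ⟨y, hy⟩ hdir).mp hx
    have hbot : (sSup c : Ideal R) ≠ ⊥ := fun h => hN.1 (eq_bot_iff.mpr (h ▸ hNc))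
    have h0 : ((sSup c : Ideal R) : FracId R) ≠ 0 := coeIdeal_ne_zero_iff.mpr hbot
    refine ⟨sSup c, ⟨?_, ⟨hbot, le_antisymm ?_ (s.le_star _ h0)⟩, hNc⟩, fun z hz => le_sSup hz⟩
    · intro h
      obtain ⟨J, hJc, hJ⟩ := hmem 1 (h ▸ Submodule.mem_top)
      exact (hcS hJc).1 (Ideal.eq_top_iff_one J |>.mpr hJ)
    · intro z hz
      obtain ⟨J, hJ0, hJfg, hJle, hzJ⟩ := (hft _ h0 z).mp hz
      obtain ⟨t, rfl⟩ := exists_finset_span (hJle.trans FractionalIdeal.coeIdeal_le_one) hJfg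
      have htc : ∀ x ∈ t, ∃ I ∈ c, x ∈ I := by
        intro x hx
        exact hmem x ((coeIdeal_le_coeIdeal (FractionRing R)).mp hJle (Ideal.subset_span hx))
      obtain ⟨I₁, hI₁c, hI₁⟩ := finset_subset_chain_mem hchain hy t htc
      have hspan : (Ideal.span (↑t) : Ideal R) ≤ I₁ := Ideal.span_le.mpr hI₁
      have hI₁star := (hcS hI₁c).2.1
      have hI₁0 : (I₁ : FracId R) ≠ 0 := coeIdeal_ne_zero_iff.mpr hI₁star.1
      have hle2 := s.star_mono _ _ hJ0 hI₁0 ((coeIdeal_le_coeIdeal (FractionRing R)).mpr hspan)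
      rw [hI₁star.2] at hle2
      exact (coeIdeal_le_coeIdeal (FractionRing R)).mpr (le_sSup hI₁c) (hle2 hzJ)
  obtain ⟨M, hNM, hMmem, hMmax⟩ := hzorn
  exact ⟨M, ⟨hMmem.1, hMmem.2.1, fun J hJt hJs hMJ =>
    le_antisymm (hMmax ⟨hJt, hJs, hNM.trans hMJ⟩ hMJ) hMJ⟩, hNM⟩

end StarCharAux
/-- If `⋆` is a finite-type star operation with every maximal `⋆`-ideal of
height one, and `R` is `⋆`-potent, then `R` has finite `⋆`-character. -/
theorem finite_star_character {R : Type*} [CommRing R] [IsDomain R]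
    (s : StarOp R) (hft : s.FiniteType)
    (hdim : ∀ M : Ideal R, s.IsMaxStarIdeal M → HeightOnePrime M)
    (hpot : s.PotentDomain) :
    ∀ a : R, a ≠ 0 → {M : Ideal R | s.IsMaxStarIdeal M ∧ a ∈ M}.Finite := by
  classical
  intro a ha
  by_contra hinf
  replace hinf : {M : Ideal R | s.IsMaxStarIdeal M ∧ a ∈ M}.Infinite := hinf
  set T : Set (Ideal R) := {M : Ideal R | s.IsMaxStarIdeal M ∧ a ∈ M} with hT
  haveI : Infinite T := hinf.to_subtype
  set U : Ultrafilter T := Ultrafilter.of Filter.cofinite with hUdef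
  have hUcof : ∀ S : Set T, S ∈ (Filter.cofinite : Filter T) → S ∈ U := fun S hS =>
    Filter.le_def.mp (Ultrafilter.of_le (Filter.cofinite : Filter T)) S hS
  have hUinf : ∀ S ∈ U, S.Infinite := by
    intro S hS
    by_contra hfin
    rw [Set.not_infinite] at hfin
    have hcompl : Sᶜ ∈ U := hUcof _ (Filter.mem_cofinite.mpr (by rwa [compl_compl]))
    have : (∅ : Set T) ∈ U := by
      have h2 := Filter.inter_mem hS hcompl
      rwa [Set.inter_compl_self] at h2
    exact Ultrafilter.empty_notMem this
  -- the ultrafilter-limit ideal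
  let N : Ideal R :=
    { carrier := {r : R | {i : T | r ∈ i.1} ∈ U}
      add_mem' := fun {x y} hx hy => Filter.mem_of_superset (Filter.inter_mem hx hy)
        (fun i hi => Ideal.add_mem _ hi.1 hi.2)
      zero_mem' := Filter.univ_mem' (fun i => Ideal.zero_mem _)
      smul_mem' := fun c x hx => Filter.mem_of_superset hx
        (fun i hi => by simpa [smul_eq_mul] using Ideal.mul_mem_left _ c hi) }
  have memN : ∀ r : R, r ∈ N ↔ {i : T | r ∈ i.1} ∈ U := fun r => Iff.rfl
  have haN : a ∈ N := (memN a).mpr (Filter.univ_mem' (fun i => i.2.2))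
  have hNbot : N ≠ ⊥ := fun h => ha (Ideal.mem_bot.mp (h ▸ haN))
  have hN0 : (N : FracId R) ≠ 0 := StarCharAux.coeIdeal_ne_zero_iff.mpr hNbot
  have hNtop : N ≠ ⊤ := by
    intro h
    have h1 : (1 : R) ∈ N := h ▸ Submodule.mem_top
    have h2 : {i : T | (1 : R) ∈ i.1} ∈ U := (memN 1).mp h1
    have h3 : {i : T | (1 : R) ∈ i.1} = (∅ : Set T) := by
      ext i
      simp only [Set.mem_setOf_eq, Set.mem_empty_iff_false, iff_false]
      exact fun h4 => i.2.1.1 (Ideal.eq_top_iff_one _ |>.mpr h4)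
    exact Ultrafilter.empty_notMem (h3 ▸ h2)
  -- N is a star ideal
  have hNstar : s.IsStarIdeal N := by
    refine ⟨hNbot, le_antisymm ?_ (s.le_star _ hN0)⟩
    intro z hz
    obtain ⟨J, hJ0, hJfg, hJle, hzJ⟩ := (hft _ hN0 z).mp hz
    obtain ⟨t, rfl⟩ := StarCharAux.exists_finset_span
      (hJle.trans FractionalIdeal.coeIdeal_le_one) hJfg
    have htN : (Ideal.span (↑t) : Ideal R) ≤ N :=
      (FractionalIdeal.coeIdeal_le_coeIdeal (FractionRing R)).mp hJle
    have hSU : {i : T | (Ideal.span (↑t) : Ideal R) ≤ i.1} ∈ U := by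
      have heq : {i : T | (Ideal.span (↑t) : Ideal R) ≤ i.1} = ⋂ x ∈ t, {i : T | x ∈ i.1} := by
        ext i
        simp only [Set.mem_setOf_eq, Set.mem_iInter]
        constructor
        · intro h x hx
          exact h (Ideal.subset_span hx)
        · intro h
          exact Ideal.span_le.mpr (fun x hx => h x hx)
      rw [heq]
      exact (Filter.biInter_mem t.finite_toSet).mpr
        (fun x hx => (memN x).mp (htN (Ideal.subset_span hx)))
    obtain ⟨i₀, hi₀⟩ := (hUinf _ hSU).nonempty
    have hi₀star : s.IsStarIdeal i₀.1 := i₀.2.1.2.1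
    have hi₀0 : (i₀.1 : FracId R) ≠ 0 := StarCharAux.coeIdeal_ne_zero_iff.mpr hi₀star.1
    have hzle : ∀ i : T, (Ideal.span (↑t) : Ideal R) ≤ i.1 → z ∈ (i.1 : FracId R) := by
      intro i hi
      have histar : s.IsStarIdeal i.1 := i.2.1.2.1
      have hi0 : (i.1 : FracId R) ≠ 0 := StarCharAux.coeIdeal_ne_zero_iff.mpr histar.1
      have hle2 := s.star_mono _ _ hJ0 hi0
        ((FractionalIdeal.coeIdeal_le_coeIdeal (FractionRing R)).mpr hi)
      rw [histar.2] at hle2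
      exact hle2 hzJ
    obtain ⟨r, hrM, hr⟩ := (FractionalIdeal.mem_coeIdeal _).mp (hzle i₀ hi₀)
    have hrall : {i : T | r ∈ i.1} ∈ U := by
      refine Filter.mem_of_superset hSU ?_
      intro i hi
      obtain ⟨r', hr'M, hr'⟩ := (FractionalIdeal.mem_coeIdeal _).mp (hzle i hi)
      have : r' = r := IsFractionRing.injective R (FractionRing R) (by rw [hr', hr])
      exact this ▸ hr'M
    exact (FractionalIdeal.mem_coeIdeal _).mpr ⟨r, (memN r).mpr hrall, hr⟩
  -- N is prime
  have hNprime : N.IsPrime := by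
    refine ⟨hNtop, ?_⟩
    intro x y hxy
    have hsub : {i : T | x * y ∈ i.1} ⊆ {i : T | x ∈ i.1} ∪ {i : T | y ∈ i.1} := by
      intro i hi
      exact ((StarCharAux.isPrime_of_isMaxStarIdeal i.2.1).mem_or_mem hi).imp id id
    have hmem := Filter.mem_of_superset ((memN (x * y)).mp hxy) hsub
    exact (Ultrafilter.union_mem_iff.mp hmem).imp (memN x).mpr (memN y).mpr
  -- N is a maximal star ideal
  obtain ⟨M', hM', hNM'⟩ := StarCharAux.exists_max_star_ideal s hft hNstar hNtop
  have hNeq : N = M' := by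
    rcases eq_or_lt_of_le hNM' with h | h
    · exact h
    · exact absurd ((hdim M' hM').2.2 N hNprime h) hNbot
  -- use potency
  obtain ⟨-, B, ⟨hBbot, hBfg, Mu, hMu, huniq⟩, hBM⟩ := hpot M' hM'
  obtain ⟨t, ht⟩ := hBfg
  have hBN : B ≤ N := hNeq ▸ hBM
  have hSU : {i : T | B ≤ i.1} ∈ U := by
    have heq : {i : T | B ≤ i.1} = ⋂ x ∈ t, {i : T | x ∈ i.1} := by
      ext i
      simp only [Set.mem_setOf_eq, Set.mem_iInter]
      constructor
      · intro h x hx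
        exact h (ht ▸ Ideal.subset_span hx)
      · intro h
        rw [← ht]
        exact Ideal.span_le.mpr (fun x hx => h x hx)
    rw [heq]
    exact (Filter.biInter_mem t.finite_toSet).mpr
      (fun x hx => (memN x).mp (hBN (ht ▸ Ideal.subset_span hx)))
  obtain ⟨i, hi, j, hj, hij⟩ := (hUinf _ hSU).nontrivial
  have hiMu : i.1 = Mu := huniq i.1 ⟨i.2.1, hi⟩
  have hjMu : j.1 = Mu := huniq j.1 ⟨j.2.1, hj⟩
  exact hij (Subtype.ext (hiMu.trans hjMu.symm))
end
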